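/- arXiv:2308.16902 — 2 statements merged into one kernel-verified Lean document; each statement's English description precedes it below -/
import Mathlib

section
/- If a protocol is (f+1)-accountably safe under a delay-free network, and every safety violation achievable under partial synchrony with f adversary replicas can be simulated in a delay-free network (producing an identically distributed client view) with n-f adversary replicas in n-f different ways—each leaving a different single replica among the first n-f honest—then the protocol satisfies f-finality (safety under partial synchrony with ≤ f adversary replicas, except with negligible probability). -/
/-!
Every safety violation is an accountability failure in some world `i < n - f`: fewer than
`f + 1` accused replicas fail every world, and `f + 1` accused replicas cannot all lie among the
last `f`, so one of them is the honest replica of some world. Since each world reproduces the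
partially-synchronous view distribution, a union bound over the `n - f` worlds bounds the
violation probability by a sum of at most `n` negligible functions, which is negligible.
-/

/-- A function `ε : ℕ → ℝ` (of the security parameter) is negligible. -/
def Negligible (ε : ℕ → ℝ) : Prop :=
  ∀ c : ℕ, ∃ N : ℕ, ∀ k ≥ N, ε k ≤ ((k : ℝ)⁻¹) ^ c

namespace Negligible

theorem zero : Negligible fun _ => 0 :=
  fun _ => ⟨0, fun _ _ => by positivity⟩

theorem mono {ε δ : ℕ → ℝ} (hδ : Negligible δ) (h : ∀ k, ε k ≤ δ k) : Negligible ε := by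
  intro c
  obtain ⟨N, hN⟩ := hδ c
  exact ⟨N, fun k hk => (h k).trans (hN k hk)⟩

theorem add {ε δ : ℕ → ℝ} (hε : Negligible ε) (hδ : Negligible δ) :
    Negligible fun k => ε k + δ k := by
  intro c
  obtain ⟨N₁, hN₁⟩ := hε (c + 1)
  obtain ⟨N₂, hN₂⟩ := hδ (c + 1)
  refine ⟨max (max N₁ N₂) 2, fun k hk => ?_⟩
  have hk2 : (2 : ℝ) ≤ k := by exact_mod_cast le_of_max_le_right hk
  have hinv : 2 * (k : ℝ)⁻¹ ≤ 1 := by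
    rw [← div_eq_mul_inv, div_le_one (by linarith)]
    exact hk2
  calc ε k + δ k ≤ ((k : ℝ)⁻¹) ^ (c + 1) + ((k : ℝ)⁻¹) ^ (c + 1) :=
        add_le_add (hN₁ k (by omega)) (hN₂ k (by omega))
    _ = ((k : ℝ)⁻¹) ^ c * (2 * (k : ℝ)⁻¹) := by ring
    _ ≤ ((k : ℝ)⁻¹) ^ c * 1 := by gcongr
    _ = ((k : ℝ)⁻¹) ^ c := mul_one _

theorem finset_sum {ι : Type*} (s : Finset ι) {ε : ι → ℕ → ℝ} (h : ∀ i ∈ s, Negligible (ε i)) :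
    Negligible fun k => ∑ i ∈ s, ε i k := by
  classical
  induction s using Finset.induction with
  | empty => simpa using zero
  | insert i s hi ih =>
    simp only [Finset.sum_insert hi]
    exact (h i (Finset.mem_insert_self i s)).add
      (ih fun j hj => h j (Finset.mem_insert_of_mem hj))

end Negligible

theorem Finset.exists_castLE_mem_of_sub_lt_card {m n : ℕ} (h : m ≤ n) (A : Finset (Fin n))
    (hA : n - m < A.card) : ∃ j : Fin m, Fin.castLE h j ∈ A := by
  classical
  by_contra! hnot
  have hsub : A ⊆ (Finset.univ.map (Fin.castLEEmb h))ᶜ := by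
    intro a ha
    simp only [Finset.mem_compl, Finset.mem_map, Finset.mem_univ, true_and, not_exists]
    rintro j rfl
    exact hnot j ha
  have := Finset.card_le_card hsub
  rw [Finset.card_compl, Finset.card_map, Finset.card_univ, Fintype.card_fin,
    Fintype.card_fin] at this
  omega

theorem PMF.toReal_toOuterMeasure_le_sum_of_subset_iUnion {α ι : Type*} [Fintype ι]
    (p : PMF α) {s : Set α} {t : ι → Set α} (hst : s ⊆ ⋃ i, t i) :
    (p.toOuterMeasure s).toReal ≤ ∑ i, (p.toOuterMeasure (t i)).toReal := by
  have hfin : ∀ u : Set α, p.toOuterMeasure u ≠ ⊤ := fun u => by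
    rw [PMF.toOuterMeasure_apply]
    exact p.tsum_coe_indicator_ne_top u
  rw [← ENNReal.toReal_sum fun i _ => hfin (t i)]
  refine ENNReal.toReal_mono (ENNReal.sum_ne_top.2 fun i _ => hfin (t i)) ?_
  exact (MeasureTheory.measure_mono hst).trans (MeasureTheory.measure_iUnion_fintype_le _ t)

theorem exists_world_accusation_failure {n f : ℕ} (hf : f < n) (A : Finset (Fin n)) :
    ∃ j : Fin (n - f), ¬ (f + 1 ≤ A.card ∧ Fin.castLE (n.sub_le f) j ∉ A) := by
  by_cases hA : f < A.card
  · obtain ⟨j, hj⟩ := Finset.exists_castLE_mem_of_sub_lt_card (n.sub_le f) A (by omega)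
    exact ⟨j, fun h => h.2 hj⟩
  · exact ⟨⟨0, by omega⟩, fun h => hA h.1⟩

/-- Accountability implies finality.  `ν k` is the distribution of client views produced by
a partially-synchronous adversary controlling at most `f` replicas; for each `i < n - f`,
`μ i k` is the view distribution produced by the delay-free adversary of world `i`, which
corrupts all replicas except replica `i`.  Assume the simulation property: each world `i`
reproduces the partially-synchronous view distribution (`μ i = ν`).  Assume
`(f+1)`-accountable safety under the delay-free network: in each world `i`, except with
negligible probability, a safety violation entails that the forensic algorithm `F` outputs
at least `f+1` replicas, none of which is the honest replica `i`.  Then the protocol is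
`f`-final: the probability of a safety violation under the partially-synchronous adversary
is negligible. -/
theorem accountability_implies_finality
    (n f : ℕ) (hf : f < n)
    (View : Type) (Viol : View → Prop) (F : View → Finset (Fin n))
    (ν : ℕ → PMF View)                 -- partially-synchronous execution, ≤ f corrupt
    (μ : Fin n → ℕ → PMF View)         -- delay-free world i, all corrupt except replica i
    (hsim : ∀ i : Fin n, (i : ℕ) < n - f → μ i = ν)
    (hacc : ∀ i : Fin n, (i : ℕ) < n - f → ∃ ε : ℕ → ℝ, Negligible ε ∧
      ∀ k : ℕ,
        (((μ i k).toOuterMeasure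
          {v | Viol v ∧ ¬ (f + 1 ≤ (F v).card ∧ i ∉ F v)}).toReal ≤ ε k)) :
    Negligible (fun k => ((ν k).toOuterMeasure {v | Viol v}).toReal) := by
  choose ε hneg hbd using hacc
  let world : Fin (n - f) → Fin n := Fin.castLE (n.sub_le f)
  have hcover : {v | Viol v} ⊆
      ⋃ j, {v | Viol v ∧ ¬ (f + 1 ≤ (F v).card ∧ world j ∉ F v)} := fun v hv => by
    obtain ⟨j, hj⟩ := exists_world_accusation_failure hf (F v)
    exact Set.mem_iUnion.2 ⟨j, hv, hj⟩
  refine (Negligible.finset_sum Finset.univ fun j _ => hneg (world j) j.isLt).mono fun k => ?_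
  refine ((ν k).toReal_toOuterMeasure_le_sum_of_subset_iUnion hcover).trans ?_
  refine Finset.sum_le_sum fun j _ => ?_
  rw [← hsim (world j) j.isLt]
  exact hbd (world j) j.isLt k
end

section
/- Given n - f identically distributed worlds where world i's honest replica is i, and a forensic algorithm that on safety violation outputs (with probability ≥ p) a set of ≥ f+1 accused replicas drawn from [n], there is at least one pair (world i, accused set S) with i ∈ S occurring with probability ≥ p/(n-f); hence perfect soundness (never accusing an honest replica) across all worlds is impossible whenever p > 0 and f < n. -/
lemma aux_exists_small {n f : ℕ} (hf : f ≤ n) (S : Finset (Fin n))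
    (hS : f + 1 ≤ S.card) : ∃ i ∈ S, (i : ℕ) < n - f := by
  by_contra h
  push_neg at h
  have hsub : S ⊆ Finset.univ.filter (fun i : Fin n => n - f ≤ (i : ℕ)) := by
    intro i hi
    simp only [Finset.mem_filter, Finset.mem_univ, true_and]
    exact h i hi
  have hcard : (Finset.univ.filter (fun i : Fin n => n - f ≤ (i : ℕ))).card ≤ f := by
    have hinj : Set.InjOn Fin.val ((Finset.univ.filter (fun i : Fin n => n - f ≤ (i : ℕ))) : Set (Fin n)) :=
      Fin.val_injective.injOn
    have := Finset.card_image_of_injOn hinj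
    rw [← this]
    have him : (Finset.univ.filter (fun i : Fin n => n - f ≤ (i : ℕ))).image Fin.val ⊆ Finset.Ico (n - f) n := by
      intro x hx
      simp only [Finset.mem_image, Finset.mem_filter] at hx
      obtain ⟨i, ⟨_, hi⟩, rfl⟩ := hx
      exact Finset.mem_Ico.2 ⟨hi, i.isLt⟩
    calc _ ≤ (Finset.Ico (n - f) n).card := Finset.card_le_card him
      _ = n - (n - f) := Nat.card_Ico _ _
      _ = f := Nat.sub_sub_self hf
  have := (Finset.card_le_card hsub).trans hcard
  omega

/-- Combination of the pigeonhole fact and an averaging argument: given `n - f`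
identically distributed worlds (shared distribution `μ`), where in world `i` replica `i`
is honest, and a forensic algorithm that with probability at least `p > 0` outputs at
least `f+1` accused replicas from the `n` replicas, there is a world `i < n - f` in which
replica `i` is accused with probability at least `p/(n-f)`; hence perfect soundness
(never accusing the honest replica) in all `n - f` worlds is impossible. -/
theorem no_perfect_soundness
    (n f : ℕ) (hf : f < n)
    (Transcript : Type) (μ : PMF Transcript)
    (F : Transcript → Finset (Fin n))
    (p : ℝ) (hp : 0 < p)
    (hAcc : p ≤ (μ.toOuterMeasure {τ | f + 1 ≤ (F τ).card}).toReal) :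
    (∃ i : Fin n, (i : ℕ) < n - f ∧
      p / (n - f) ≤ (μ.toOuterMeasure {τ | i ∈ F τ}).toReal) ∧
    ¬ (∀ i : Fin n, (i : ℕ) < n - f → μ.toOuterMeasure {τ | i ∈ F τ} = 0) := by
  set m := μ.toOuterMeasure with hm
  have hle1 : ∀ s : Set Transcript, m s ≤ 1 := by
    intro s
    calc m s ≤ m Set.univ := m.mono (Set.subset_univ s)
      _ = 1 := (μ.toOuterMeasure_apply_eq_one_iff _).2 (Set.subset_univ _)
  have hne : ∀ s : Set Transcript, m s ≠ ⊤ := fun s =>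
    ne_top_of_le_ne_top ENNReal.one_ne_top (hle1 s)
  -- the worlds
  set A : Fin (n - f) → Set Transcript :=
    fun j => {τ | Fin.castLE (Nat.sub_le n f) j ∈ F τ} with hA
  have hsub : {τ | f + 1 ≤ (F τ).card} ⊆ ⋃ j, A j := by
    intro τ hτ
    obtain ⟨i, hi, hlt⟩ := aux_exists_small hf.le (F τ) hτ
    refine Set.mem_iUnion.2 ⟨⟨(i : ℕ), hlt⟩, ?_⟩
    simpa [hA, Fin.ext_iff] using hi
  have hunion : m {τ | f + 1 ≤ (F τ).card} ≤ ∑ j, m (A j) :=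
    (m.mono hsub).trans (MeasureTheory.measure_iUnion_fintype_le m A)
  -- pass to reals
  have hsum_ne : ∑ j, m (A j) ≠ ⊤ := by
    refine (ENNReal.sum_lt_top.2 fun j _ => ?_).ne
    exact lt_of_le_of_lt (hle1 _) ENNReal.one_lt_top
  have hreal : p ≤ ∑ j, (m (A j)).toReal := by
    calc p ≤ (m {τ | f + 1 ≤ (F τ).card}).toReal := hAcc
      _ ≤ (∑ j, m (A j)).toReal := ENNReal.toReal_mono hsum_ne hunion
      _ = ∑ j, (m (A j)).toReal := ENNReal.toReal_sum (fun j _ => hne _)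
  have hnf : (0 : ℝ) < (n - f : ℕ) := by
    have : 0 < n - f := by omega
    exact_mod_cast this
  -- averaging
  have hcardnf : (Finset.univ : Finset (Fin (n - f))).card = n - f := by simp
  have hexists : ∃ j : Fin (n - f), p / (n - f) ≤ (m (A j)).toReal := by
    by_contra h
    push_neg at h
    have : ∑ j, (m (A j)).toReal < ∑ _j : Fin (n - f), p / (n - f) := by
      apply Finset.sum_lt_sum_of_nonempty
      · exact Finset.univ_nonempty_iff.2 ⟨⟨0, by omega⟩⟩
      · intro j _; exact h j
    rw [Finset.sum_const, hcardnf, nsmul_eq_mul] at this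
    have hcast : ((n - f : ℕ) : ℝ) = ((n : ℝ) - f) := by
      have : f ≤ n := hf.le
      push_cast [this]; ring
    rw [hcast] at this
    rw [mul_div_cancel₀ p (by rw [← hcast]; exact hnf.ne')] at this
    exact absurd (hreal.trans_lt this) (lt_irrefl p)
  obtain ⟨j, hj⟩ := hexists
  have hcast : ((n - f : ℕ) : ℝ) = ((n : ℝ) - f) := by
    push_cast [hf.le]; ring
  refine ⟨⟨Fin.castLE (Nat.sub_le n f) j, by simp, by
    show p / ((n:ℝ) - (f:ℝ)) ≤ _
    exact hj⟩, ?_⟩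
  intro hall
  have hz := hall (Fin.castLE (Nat.sub_le n f) j) (by simp)
  rw [hm] at *
  rw [show {τ | Fin.castLE (Nat.sub_le n f) j ∈ F τ} = A j from rfl] at hz
  rw [hz] at hj
  simp only [ENNReal.toReal_zero] at hj
  have : p / ((n : ℝ) - f) > 0 := div_pos hp (by rw [← hcast]; exact hnf)
  linarith
end
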